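/- Let x ∈ ℕ^q with x_i ≥ 3 for all i, and let y be an integer optimal solution of the LP max 1^T y s.t. y ∈ cone of half-incidence vectors of S and y ≤ x, with y = Zc for an integer c. Then every nontrivial connected component S' of the support graph S_c satisfies: the complete S'-partite graph with part sizes (y_i)_{i ∈ V(S')} is connected and has at least three vertices. -/

import Mathlib

/-!
If both endpoints of an edge `e` were unsaturated (`y < x` there), then `y + z_e` would still
lie in the cone and, by integrality, below `x`, with a larger total; so every edge has an
endpoint `p` with `y p = x p ≥ 3`. A nontrivial component of `S_c` contains an edge, hence a
part of size at least three.
For connectivity: `y a > 0` exactly when `a` is incident to an edge of `S_c`. Copies of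
adjacent nodes are adjacent or equal, two copies of one node are joined through a copy of a
neighbour, and a path in `S_c` then connects any two copies.
-/

open Relation

section Blowup

variable {α : Type*} (R : α → α → Prop) (n : α → ℕ) (i0 : α)

/-- The vertices of the complete `S'`-partite graph with part sizes `n`, where `S'` is the
`R`-component of `i0`. -/
abbrev ComponentBlowup : Type _ := {v : Σ a, Fin (n a) // ReflTransGen R i0 v.1}

variable {R n i0}

/-- Through a loop at `a`, the copies of `a` are pairwise adjacent. -/
def ComponentBlowup.Adj (u v : ComponentBlowup R n i0) : Prop := u.1 ≠ v.1 ∧ R u.1.1 v.1.1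

namespace ComponentBlowup

lemma le_card [Finite α] {a : α} (h : ReflTransGen R i0 a) :
    n a ≤ Nat.card (ComponentBlowup R n i0) :=
  calc n a = Nat.card (Fin (n a)) := (Nat.card_fin _).symm
    _ ≤ _ := Nat.card_le_card_of_injective (fun k => ⟨⟨a, k⟩, h⟩) fun k l hkl => by
      simpa using hkl

lemma reflTransGen_adj_of_rel {u w : ComponentBlowup R n i0} (h : R u.1.1 w.1.1) :
    ReflTransGen Adj u w := by
  by_cases huw : u.1 = w.1
  · exact Subtype.ext huw ▸ ReflTransGen.refl
  · exact ReflTransGen.single ⟨huw, h⟩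

variable [Std.Symm R]

lemma reflTransGen_adj_of_fst_eq (hn : ∀ a, 0 < n a ↔ ∃ b, R a b)
    {u w : ComponentBlowup R n i0} (h : u.1.1 = w.1.1) : ReflTransGen Adj u w := by
  obtain ⟨b, hab⟩ := (hn _).1 u.1.2.pos
  let t : ComponentBlowup R n i0 := ⟨⟨b, ⟨0, (hn b).2 ⟨_, symm hab⟩⟩⟩, u.2.tail hab⟩
  have htw : R t.1.1 w.1.1 := h ▸ symm hab
  exact (reflTransGen_adj_of_rel (w := t) hab).trans (reflTransGen_adj_of_rel htw)

theorem reflTransGen_adj (hn : ∀ a, 0 < n a ↔ ∃ b, R a b) (u w : ComponentBlowup R n i0) :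
    ReflTransGen Adj u w := by
  suffices ∀ b, ReflTransGen R u.1.1 b → ∀ w : ComponentBlowup R n i0, w.1.1 = b →
      ReflTransGen Adj u w from this _ ((symm u.2).trans w.2) w rfl
  intro b hb
  induction hb with
  | refl => exact fun w hw => reflTransGen_adj_of_fst_eq hn hw.symm
  | @tail b k hub hbk ih =>
    intro w hw
    let t : ComponentBlowup R n i0 := ⟨⟨b, ⟨0, (hn b).2 ⟨k, hbk⟩⟩⟩, u.2.trans hub⟩
    exact (ih t rfl).trans (reflTransGen_adj_of_rel (hw ▸ hbk))

end ComponentBlowup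

end Blowup

section HalfIncidence

variable {V ι : Type*} (ep : ι → V × V)

def supportAdj (c : ι → ℕ) (a b : V) : Prop :=
  ∃ e, c e ≠ 0 ∧ (ep e = (a, b) ∨ ep e = (b, a))

instance (c : ι → ℕ) : Std.Symm (supportAdj ep c) :=
  ⟨fun _ _ ⟨e, hc, h⟩ => ⟨e, hc, h.symm⟩⟩

lemma reflTransGen_supportAdj_of_endpoints {c : ι → ℕ} {i0 j p : V} {e : ι}
    (hj : ReflTransGen (supportAdj ep c) i0 j) (hce : c e ≠ 0)
    (hje : (ep e).1 = j ∨ (ep e).2 = j) (hp : p = (ep e).1 ∨ p = (ep e).2) :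
    ReflTransGen (supportAdj ep c) i0 p := by
  have hadj : supportAdj ep c (ep e).1 (ep e).2 := ⟨e, hce, Or.inl rfl⟩
  rcases hje with rfl | rfl <;> rcases hp with rfl | rfl
  exacts [hj, hj.tail hadj, hj.tail (symm hadj), hj]

variable [DecidableEq V]

noncomputable def halfIncidence (e : ι) (i : V) : ℝ :=
  ((if (ep e).1 = i then 1 else 0) + (if (ep e).2 = i then 1 else 0)) / 2

lemma halfIncidence_le_one (e : ι) (i : V) : halfIncidence ep e i ≤ 1 := by
  unfold halfIncidence; split_ifs <;> norm_num

lemma halfIncidence_eq_zero {e : ι} {i : V} (h1 : (ep e).1 ≠ i) (h2 : (ep e).2 ≠ i) :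
    halfIncidence ep e i = 0 := by
  simp [halfIncidence, h1, h2]

lemma sum_halfIncidence [Fintype V] (e : ι) : ∑ i, halfIncidence ep e i = 1 := by
  simp [halfIncidence, ← Finset.sum_div, Finset.sum_add_distrib]

variable [Fintype ι]

/-- `2 (Zc)_i`: the degree of `i` with edge multiplicities `c`, loops counting twice. -/
def weightedDegree (c : ι → ℕ) (i : V) : ℕ :=
  ∑ e, ((if (ep e).1 = i then c e else 0) + (if (ep e).2 = i then c e else 0))

lemma weightedDegree_pos_iff {c : ι → ℕ} {i : V} :
    0 < weightedDegree ep c i ↔ ∃ j, supportAdj ep c i j := by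
  simp only [weightedDegree, Finset.sum_pos_iff, Finset.mem_univ, true_and]
  constructor
  · rintro ⟨e, he⟩
    have hc : c e ≠ 0 := by rintro h; simp [h] at he
    by_cases h1 : (ep e).1 = i
    · exact ⟨(ep e).2, e, hc, Or.inl (Prod.ext h1 rfl)⟩
    · have h2 : (ep e).2 = i := by by_contra h2; simp [h1, h2] at he
      exact ⟨(ep e).1, e, hc, Or.inr (Prod.ext rfl h2)⟩
  · rintro ⟨j, e, hc, h | h⟩ <;> exact ⟨e, by simp [h, Nat.pos_of_ne_zero hc]⟩

def InHalfIncidenceCone (y : V → ℝ) : Prop :=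
  ∃ a : ι → ℝ, (∀ e, 0 ≤ a e) ∧ ∀ i, y i = ∑ e, halfIncidence ep e i * a e

lemma cast_weightedDegree (c : ι → ℕ) (i : V) :
    (weightedDegree ep c i : ℝ) = 2 * ∑ e, halfIncidence ep e i * c e := by
  rw [weightedDegree, Nat.cast_sum, Finset.mul_sum]
  refine Finset.sum_congr rfl fun e _ => ?_
  unfold halfIncidence
  split_ifs <;> push_cast <;> ring

lemma inHalfIncidenceCone_of_two_mul_eq_weightedDegree {c : ι → ℕ} {y : V → ℕ}
    (hy : ∀ i, 2 * y i = weightedDegree ep c i) :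
    InHalfIncidenceCone ep fun i => (y i : ℝ) := by
  refine ⟨fun e => c e, fun e => Nat.cast_nonneg _, fun i => ?_⟩
  have h : (2 * y i : ℝ) = weightedDegree ep c i := by exact_mod_cast hy i
  linarith [cast_weightedDegree ep c i]

variable {ep} in
lemma InHalfIncidenceCone.add_halfIncidence {y : V → ℝ}
    (hy : InHalfIncidenceCone ep y) (e0 : ι) :
    InHalfIncidenceCone ep (y + halfIncidence ep e0) := by
  classical
  obtain ⟨a, ha, hya⟩ := hy
  refine ⟨a + Pi.single e0 1, fun e => ?_, fun i => ?_⟩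
  · have := ha e
    simp only [Pi.add_apply, Pi.single_apply]
    split_ifs <;> linarith
  · simp [hya, mul_add, Finset.sum_add_distrib, Pi.single_apply]

theorem saturated_endpoint_of_optimal [Fintype V] {x y : V → ℕ}
    (hy : InHalfIncidenceCone ep fun i => (y i : ℝ)) (hle : ∀ i, y i ≤ x i)
    (hopt : ∀ y' : V → ℝ, InHalfIncidenceCone ep y' → (∀ i, y' i ≤ x i) →
      ∑ i, y' i ≤ ∑ i, (y i : ℝ)) (e : ι) :
    y (ep e).1 = x (ep e).1 ∨ y (ep e).2 = x (ep e).2 := by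
  by_contra! hunsat
  have hbound : ∀ i, (y i : ℝ) + halfIncidence ep e i ≤ x i := by
    intro i
    by_cases hi : (ep e).1 = i ∨ (ep e).2 = i
    · have hlt : y i < x i := by
        rcases hi with rfl | rfl
        exacts [(hle _).lt_of_ne hunsat.1, (hle _).lt_of_ne hunsat.2]
      have : (y i : ℝ) + 1 ≤ x i := by exact_mod_cast hlt
      linarith [halfIncidence_le_one ep e i]
    · push Not at hi
      simpa [halfIncidence_eq_zero ep hi.1 hi.2] using hle i
  have := hopt _ (hy.add_halfIncidence e) hbound
  simp only [Pi.add_apply, Finset.sum_add_distrib, sum_halfIncidence] at this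
  linarith

end HalfIncidence

/-- Let `x ∈ ℕ^q` with `x i ≥ 3` for all `i`, and let `y` be an integer optimal
solution of the LP `max 1ᵀy s.t. y ∈ cone of half-incidence vectors of S, y ≤ x`,
with `y = Zc` for an integer vector `c`. Then every nontrivial connected component
`S'` of the support graph `S_c` (here: the component of a node `i0` whose component
contains an edge of positive `c`) satisfies: the complete `S'`-partite graph with
part sizes `(y i)_{i ∈ V(S')}` is connected and has at least three vertices. -/
theorem nontrivial_component_blowup_connected_and_large
    (q m : ℕ) (ep : Fin m → Fin q × Fin q)
    (x : Fin q → ℕ) (hx : ∀ i, 3 ≤ x i)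
    (c : Fin m → ℕ) (y : Fin q → ℕ)
    (hy : ∀ i, 2 * y i = ∑ e, ((if (ep e).1 = i then c e else 0)
        + (if (ep e).2 = i then c e else 0)))
    (hle : ∀ i, y i ≤ x i)
    (hopt : ∀ y' : Fin q → ℝ,
      (∃ a : Fin m → ℝ, (∀ e, 0 ≤ a e) ∧
        ∀ i, y' i = ∑ e, ((if (ep e).1 = i then (1 : ℝ) else 0)
          + (if (ep e).2 = i then (1 : ℝ) else 0)) / 2 * a e) →
      (∀ i, y' i ≤ (x i : ℝ)) →
      ∑ i, y' i ≤ ∑ i, (y i : ℝ))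
    (i0 : Fin q)
    (hnt : ∃ j, Relation.ReflTransGen
        (fun a b => ∃ e, c e ≠ 0 ∧ (ep e = (a, b) ∨ ep e = (b, a))) i0 j ∧
      ∃ e, c e ≠ 0 ∧ ((ep e).1 = j ∨ (ep e).2 = j)) :
    (3 ≤ Nat.card {v : Σ i : Fin q, Fin (y i) //
        Relation.ReflTransGen
          (fun a b => ∃ e, c e ≠ 0 ∧ (ep e = (a, b) ∨ ep e = (b, a))) i0 v.1}) ∧
    (∀ v w : {v : Σ i : Fin q, Fin (y i) //
        Relation.ReflTransGen
          (fun a b => ∃ e, c e ≠ 0 ∧ (ep e = (a, b) ∨ ep e = (b, a))) i0 v.1},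
      Relation.ReflTransGen
        (fun a b => a.1 ≠ b.1 ∧
          ∃ e, c e ≠ 0 ∧ (ep e = (a.1.1, b.1.1) ∨ ep e = (b.1.1, a.1.1))) v w) := by
  have hn : ∀ a, 0 < y a ↔ ∃ b, supportAdj ep c a b := fun a => by
    have : 2 * y a = weightedDegree ep c a := hy a
    rw [← weightedDegree_pos_iff]
    omega
  refine ⟨?_, ComponentBlowup.reflTransGen_adj (R := supportAdj ep c) hn⟩
  obtain ⟨j, hj, e, hce, hje⟩ := hnt
  rcases saturated_endpoint_of_optimal ep (inHalfIncidenceCone_of_two_mul_eq_weightedDegree ep hy)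
    hle hopt e with hsat | hsat <;>
  exact (hx _).trans (hsat.ge.trans (ComponentBlowup.le_card
    (reflTransGen_supportAdj_of_endpoints ep hj hce hje (by simp))))
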